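/- arXiv:1508.07896 — 2 statements merged into one kernel-verified Lean document; each statement's English description precedes it below -/
import Mathlib

section
/- For all real a, β, α with 1 < a ≤ e, 0 ≤ β < 1 and α > 0, the series Σ_{k=0}^∞ ω_{β,a}(k,α) converges and its sum equals 1; that is, Σ_{k=0}^∞ α·(log a)^k·(α+kβ)^{k−1}·a^{−(α+kβ)}/k! = 1. -/
/-- `ω_{β,a}(k,α) = α (log a)^k (α+kβ)^{k-1} a^{-(α+kβ)} / k!`
(the exponent `k-1` is taken in `ℤ`, so that for `k = 0` this equals `a^{-α}`). -/
noncomputable def omegaW (β a α : ℝ) (k : ℕ) : ℝ :=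
  α * Real.log a ^ k * (α + (k : ℝ) * β) ^ ((k : ℤ) - 1) *
    a ^ (-(α + (k : ℝ) * β)) / (Nat.factorial k : ℝ)

/-!
With `L = log a`, `z = β L` and `s = α / β`, the weight is
`ω_{β,a}(k,α) = e^{-s z} · A_k(s) (z e^{-z})^k` where `A_k(s) = s (s+k)^{k-1} / k!`.
The `A_k(s)` are the Taylor coefficients of `e^{s T(w)}`, `T` being the tree function,
the inverse of `z ↦ z e^{-z}` on `[0, 1)`; hence `∑ A_k(s) (z e^{-z})^k = e^{s z}` and the
weights sum to `1`.

For small `|z|` this identity follows by expanding `e^{-(s+k) z}` and summing the absolutely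
convergent double series along antidiagonals: the `n`-th antidiagonal coefficient is an `n`-th
finite difference of the degree `n - 1` polynomial `(s + ·)^{n-1}`, hence vanishes for `n ≥ 1`.
Both sides are real-analytic in `z` on `(-e^{-2}, 1)`, where `|z e^{-z}|` stays below the radius
of convergence `1/e`, so the identity theorem extends it to `[0, 1)`.
For `β = 0` the weights are the Poisson probabilities with mean `α L`.
-/

open Real Finset Nat Filter Topology Set

theorem hasSum_pow_div_factorial (x : ℝ) : HasSum (fun m => x ^ m / m !) (exp x) := by
  simpa [Real.exp_eq_exp_ℝ] using NormedSpace.expSeries_div_hasSum_exp x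

theorem HasSum.sum_antidiagonal {α A : Type*} [AddCommMonoid α] [TopologicalSpace α]
    [ContinuousAdd α] [RegularSpace α] [AddCommMonoid A] [HasAntidiagonal A]
    {f : A × A → α} {a : α} (hf : HasSum f a) :
    HasSum (fun n => ∑ p ∈ antidiagonal n, f p) a :=
  (HasAntidiagonal.sigmaAntidiagonalEquivProd.hasSum_iff.2 hf).sigma fun n =>
    (antidiagonal n).hasSum f

theorem sum_range_neg_one_pow_mul_choose_mul_add_pow (s : ℝ) (N : ℕ) :
    ∑ k ∈ range (N + 2), (-1 : ℝ) ^ (N + 1 - k) * (N + 1).choose k * (s + k) ^ N = 0 := by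
  have hP := Polynomial.fwdDiff_iter_eq_zero_of_degree_lt
    ((Polynomial.natDegree_pow_X_add_C N s).trans_lt N.lt_succ_self)
  have := congrFun hP 0
  rw [fwdDiff_iter_eq_sum_shift] at this
  simpa [add_comm s, zsmul_eq_mul] using this

theorem abs_mul_exp_neg_lt_exp_neg_one {z : ℝ} (hz : z ∈ Ioo (-exp (-2)) 1) :
    |z * exp (-z)| < exp (-1) := by
  obtain ⟨hz₀, hz₁⟩ := hz
  rcases le_or_gt 0 z with hz | hz
  · have : z < exp (z - 1) := by linarith [add_one_lt_exp (x := z - 1) (by linarith)]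
    calc |z * exp (-z)| = z * exp (-z) := abs_of_nonneg (by positivity)
      _ < exp (z - 1) * exp (-z) := by gcongr
      _ = exp (-1) := by rw [← exp_add]; ring_nf
  · have h₂ : exp (-2) < 1 := exp_lt_one_iff.2 (by norm_num)
    calc |z * exp (-z)| = -z * exp (-z) := by rw [abs_of_neg (by nlinarith [exp_pos (-z)])]; ring
      _ < exp (-2) * exp 1 := by gcongr <;> linarith
      _ = exp (-1) := by rw [← exp_add]; norm_num

noncomputable def abelCoeff (s : ℝ) (k : ℕ) : ℝ := s * (s + k) ^ ((k : ℤ) - 1) / k !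

noncomputable def abelSeries (s w : ℝ) : ℝ := ∑' k, abelCoeff s k * w ^ k

theorem abelCoeff_zero_right {s : ℝ} (hs : s ≠ 0) : abelCoeff s 0 = 1 := by
  simp [abelCoeff, hs]

theorem abelCoeff_nonneg {s : ℝ} (hs : 0 ≤ s) (k : ℕ) : 0 ≤ abelCoeff s k := by
  unfold abelCoeff; positivity

theorem abelCoeff_le {s : ℝ} (hs : 0 < s) (k : ℕ) :
    abelCoeff s k ≤ max 1 (s * exp s) * exp 1 ^ k := by
  rcases k with _ | N
  · simp [abelCoeff_zero_right hs.ne']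
  have hN : (((N + 1 : ℕ) : ℤ) - 1) = N := by push_cast; ring
  calc abelCoeff s (N + 1) = s * ((s + (N + 1 : ℕ)) ^ N / (N + 1)!) := by
        rw [abelCoeff, hN, zpow_natCast, mul_div_assoc]
    _ ≤ s * ((s + (N + 1 : ℕ)) ^ N / N !) := by gcongr; exact N.le_succ
    _ ≤ s * exp (s + (N + 1 : ℕ)) := by gcongr; exact pow_div_factorial_le_exp _ (by positivity) N
    _ = s * exp s * exp 1 ^ (N + 1) := by rw [exp_add, ← exp_nat_mul, mul_one, mul_assoc]
    _ ≤ max 1 (s * exp s) * exp 1 ^ (N + 1) := by gcongr; exact le_max_right _ _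

theorem abs_abelCoeff_mul_pow_le {s w : ℝ} (hs : 0 < s) (k : ℕ) :
    |abelCoeff s k * w ^ k| ≤ max 1 (s * exp s) * (exp 1 * |w|) ^ k := by
  rw [abs_mul, abs_of_nonneg (abelCoeff_nonneg hs.le k), abs_pow, mul_pow, ← mul_assoc]
  gcongr
  exact abelCoeff_le hs k

theorem hasSum_abelSeries {s w : ℝ} (hs : 0 < s) (hw : |w| < exp (-1)) :
    HasSum (fun k => abelCoeff s k * w ^ k) (abelSeries s w) := by
  have hq : exp 1 * |w| < 1 := by
    calc exp 1 * |w| < exp 1 * exp (-1) := by gcongr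
      _ = 1 := by rw [← exp_add]; simp
  exact (Summable.of_norm_bounded ((summable_geometric_of_lt_one (by positivity) hq).mul_left _)
    fun k => abs_abelCoeff_mul_pow_le hs k).hasSum

theorem analyticAt_abelSeries {s w : ℝ} (hs : 0 < s) (hw : |w| < exp (-1)) :
    AnalyticAt ℝ (abelSeries s) w := by
  set p := FormalMultilinearSeries.ofScalars ℝ (abelCoeff s)
  have hradius : ENNReal.ofReal (exp (-1)) ≤ p.radius := by
    refine p.le_radius_of_bound (r := (exp (-1)).toNNReal) (max 1 (s * exp s)) fun k => ?_
    rw [Real.coe_toNNReal _ (exp_pos _).le]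
    have := abs_abelCoeff_mul_pow_le hs k (w := exp (-1))
    rwa [abs_of_pos (exp_pos _), ← exp_add, add_neg_cancel, exp_zero, one_pow, mul_one, abs_mul,
      abs_of_pos (pow_pos (exp_pos _) _), ← Real.norm_eq_abs,
      ← FormalMultilinearSeries.ofScalars_norm ℝ] at this
  have hw' : w ∈ Metric.eball (0 : ℝ) p.radius := by
    refine lt_of_lt_of_le ?_ hradius
    simpa [edist_dist, ENNReal.ofReal_lt_ofReal_iff (exp_pos _)] using hw
  have := (p.hasFPowerSeriesOnBall (pos_of_gt hw')).analyticAt_of_mem hw'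
  rwa [show p.sum = _ from FormalMultilinearSeries.ofScalarsSum_eq_tsum _] at this

theorem abelCoeff_mul_neg_pow_div_factorial {s : ℝ} (hs : 0 < s) {k m N : ℕ}
    (h : k + m = N + 1) :
    abelCoeff s k * ((-(s + k)) ^ m / m !) =
      s / (N + 1)! * ((-1) ^ m * (N + 1).choose k * (s + k) ^ N) := by
  have hsk : s + k ≠ 0 := by positivity
  have hpow : (s + k) ^ ((k : ℤ) - 1) * (s + k) ^ m = (s + k) ^ N := by
    rw [← zpow_natCast _ m, ← zpow_add₀ hsk, ← zpow_natCast]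
    congr 1
    omega
  have hchoose : ((N + 1).choose k : ℝ) * k ! * m ! = (N + 1)! := by
    rw [← Nat.choose_mul_factorial_mul_factorial (n := N + 1) (k := k) (by omega),
      show N + 1 - k = m by omega]
    push_cast; ring
  have hchoose₀ : ((N + 1).choose k : ℝ) ≠ 0 :=
    Nat.cast_ne_zero.2 (Nat.choose_pos (by omega)).ne'
  rw [abelCoeff, neg_pow, ← hpow, ← hchoose]
  field_simp

theorem sum_antidiagonal_abelCoeff_mul {s : ℝ} (hs : 0 < s) (n : ℕ) :
    ∑ p ∈ antidiagonal n, abelCoeff s p.1 * ((-(s + p.1)) ^ p.2 / p.2 !) =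
      if n = 0 then 1 else 0 := by
  rcases n with _ | N
  · simp [abelCoeff_zero_right hs.ne']
  rw [Nat.sum_antidiagonal_eq_sum_range_succ (fun k m => abelCoeff s k * ((-(s + k)) ^ m / m !)),
    sum_congr rfl fun k hk => abelCoeff_mul_neg_pow_div_factorial hs
      (show k + (N + 1 - k) = N + 1 by have := mem_range.1 hk; omega),
    ← mul_sum, sum_range_neg_one_pow_mul_choose_mul_add_pow]
  simp

noncomputable def abelDoubleTerm (s z : ℝ) (p : ℕ × ℕ) : ℝ :=
  abelCoeff s p.1 * z ^ p.1 * ((-(s + p.1) * z) ^ p.2 / p.2 !)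

theorem hasSum_abelDoubleTerm_row (s z : ℝ) (k : ℕ) :
    HasSum (fun m => abelDoubleTerm s z (k, m))
      (abelCoeff s k * (z * exp (-z)) ^ k * exp (-(s * z))) := by
  have hexp : exp (-(s + k) * z) = exp (-z) ^ k * exp (-(s * z)) := by
    rw [← exp_nat_mul, ← exp_add]; ring_nf
  rw [show abelCoeff s k * (z * exp (-z)) ^ k * exp (-(s * z)) =
      abelCoeff s k * z ^ k * exp (-(s + k) * z) by rw [hexp]; ring]
  exact (hasSum_pow_div_factorial _).mul_left _

theorem summable_abelDoubleTerm {s z : ℝ} (hs : 0 < s) (hz : |z| * exp (|z| + 1) < 1) :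
    Summable (abelDoubleTerm s z) := by
  have habs_row (k : ℕ) : HasSum (fun m => |abelDoubleTerm s z (k, m)|)
      (exp (s * |z|) * (abelCoeff s k * (|z| * exp (|z|)) ^ k)) := by
    have hexp : exp ((s + k) * |z|) = exp (s * |z|) * exp (|z|) ^ k := by
      rw [← exp_nat_mul, ← exp_add]; ring_nf
    have hterm (m : ℕ) : |abelDoubleTerm s z (k, m)| =
        abelCoeff s k * |z| ^ k * (((s + k) * |z|) ^ m / m !) := by
      simp only [abelDoubleTerm, abs_mul, abs_div, abs_pow, abs_neg, Nat.abs_cast,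
        abs_of_nonneg (abelCoeff_nonneg hs.le _), abs_of_pos (by positivity : 0 < s + k)]
    rw [funext hterm, show exp (s * |z|) * (abelCoeff s k * (|z| * exp (|z|)) ^ k) =
        abelCoeff s k * |z| ^ k * exp ((s + k) * |z|) by rw [hexp]; ring]
    exact (hasSum_pow_div_factorial _).mul_left _
  refine .of_abs ((summable_prod_of_nonneg fun _ => abs_nonneg _).2
    ⟨fun k => (habs_row k).summable, ?_⟩)
  simp_rw [fun k => (habs_row k).tsum_eq]
  refine .of_nonneg_of_le (fun k => (habs_row k).nonneg fun _ => abs_nonneg _) (fun k => ?_)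
    (((summable_geometric_of_lt_one (by positivity) hz).mul_left
      (max 1 (s * exp s))).mul_left (exp (s * |z|)))
  have hw : 0 ≤ |z| * exp (|z|) := by positivity
  have := abs_abelCoeff_mul_pow_le hs k (w := |z| * exp (|z|))
  rw [abs_of_nonneg (mul_nonneg (abelCoeff_nonneg hs.le k) (pow_nonneg hw k)),
    abs_of_nonneg hw] at this
  refine mul_le_mul_of_nonneg_left (this.trans_eq ?_) (exp_pos _).le
  rw [exp_add]; ring

theorem sum_antidiagonal_abelDoubleTerm {s : ℝ} (hs : 0 < s) (z : ℝ) (n : ℕ) :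
    ∑ p ∈ antidiagonal n, abelDoubleTerm s z p = if n = 0 then 1 else 0 := by
  have hterm : ∀ p ∈ antidiagonal n,
      abelDoubleTerm s z p = abelCoeff s p.1 * ((-(s + p.1)) ^ p.2 / p.2 !) * z ^ n := by
    intro p hp
    rw [← mem_antidiagonal.1 hp]
    simp only [abelDoubleTerm, mul_pow, pow_add]
    ring
  rw [sum_congr rfl hterm, ← sum_mul, sum_antidiagonal_abelCoeff_mul hs]
  split_ifs with hn <;> simp [hn]

theorem abelSeries_mul_exp_neg_of_abs_mul_exp_lt_one {s z : ℝ} (hs : 0 < s)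
    (hz : |z| * exp (|z| + 1) < 1) : abelSeries s (z * exp (-z)) = exp (s * z) := by
  have hF := (summable_abelDoubleTerm hs hz).hasSum
  have hdiag : HasSum (fun n => ∑ p ∈ antidiagonal n, abelDoubleTerm s z p) 1 := by
    simpa only [sum_antidiagonal_abelDoubleTerm hs] using hasSum_ite_eq (0 : ℕ) (1 : ℝ)
  have hone : ∑' p, abelDoubleTerm s z p = 1 := hF.sum_antidiagonal.unique hdiag
  have := (hF.prod_fiberwise (hasSum_abelDoubleTerm_row s z)).mul_right (exp (s * z))
  rw [hone, one_mul] at this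
  simp_rw [mul_assoc _ (exp _), ← exp_add, neg_add_cancel, exp_zero, mul_one] at this
  exact this.tsum_eq

theorem abelSeries_mul_exp_neg {s z : ℝ} (hs : 0 < s) (hz : z ∈ Ioo (-exp (-2)) 1) :
    abelSeries s (z * exp (-z)) = exp (s * z) := by
  have hf : AnalyticOnNhd ℝ (fun z => abelSeries s (z * exp (-z))) (Ioo (-exp (-2)) 1) :=
    fun z hz => (analyticAt_abelSeries hs (abs_mul_exp_neg_lt_exp_neg_one hz)).comp
      (f := fun z => z * exp (-z)) (by fun_prop)
  have hg : AnalyticOnNhd ℝ (fun z => exp (s * z)) (Ioo (-exp (-2)) 1) :=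
    fun z _ => by fun_prop
  have hsmall : {z : ℝ | |z| * exp (|z| + 1) < 1} ∈ 𝓝 0 :=
    (isOpen_lt (by fun_prop) continuous_const).mem_nhds (by simp)
  exact hf.eqOn_of_preconnected_of_eventuallyEq hg isPreconnected_Ioo ⟨by simp [exp_pos], one_pos⟩
    (mem_of_superset hsmall fun z hz => abelSeries_mul_exp_neg_of_abs_mul_exp_lt_one hs hz) hz

theorem omegaW_zero_left {a α : ℝ} (ha : 0 < a) (hα : α ≠ 0) (k : ℕ) :
    omegaW 0 a α k = (α * log a) ^ k / k ! * exp (-(α * log a)) := by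
  rw [omegaW, mul_zero, add_zero, rpow_def_of_pos ha, zpow_sub₀ hα, zpow_natCast, zpow_one]
  field_simp
  ring_nf

theorem omegaW_eq_abelCoeff_mul {a β α : ℝ} (ha : 0 < a) (hβ : 0 < β) (k : ℕ) :
    omegaW β a α k = abelCoeff (α / β) k * (β * log a * exp (-(β * log a))) ^ k *
      exp (-(α / β * (β * log a))) := by
  have hs : α / β + k = (α + k * β) / β := by field_simp
  have hexp : a ^ (-(α + k * β)) = exp (-(β * log a)) ^ k * exp (-(α / β * (β * log a))) := by
    rw [rpow_def_of_pos ha, ← exp_nat_mul, ← exp_add]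
    congr 1
    field_simp
    ring
  rw [omegaW, abelCoeff, hexp, hs, div_zpow, zpow_sub₀ hβ.ne', zpow_natCast, zpow_one]
  field_simp
  ring

theorem omegaW_tsum_eq_one (a β α : ℝ) (ha₁ : 1 < a) (ha₂ : a ≤ Real.exp 1)
    (hβ₀ : 0 ≤ β) (hβ₁ : β < 1) (hα : 0 < α) :
    Summable (fun k : ℕ => omegaW β a α k) ∧
      ∑' k : ℕ, omegaW β a α k = 1 := by
  have ha : 0 < a := one_pos.trans ha₁
  have hL₀ : 0 < log a := log_pos ha₁
  have hL₁ : log a ≤ 1 := by simpa using log_le_log ha ha₂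
  suffices HasSum (fun k => omegaW β a α k) 1 from ⟨this.summable, this.tsum_eq⟩
  rcases hβ₀.eq_or_lt with rfl | hβ
  · have := (hasSum_pow_div_factorial (α * log a)).mul_right (exp (-(α * log a)))
    rwa [← exp_add, add_neg_cancel, exp_zero, ← funext (omegaW_zero_left ha hα.ne')] at this
  · have hz : β * log a ∈ Ioo (-exp (-2)) 1 := ⟨by nlinarith [exp_pos (-2)], by nlinarith⟩
    have := (hasSum_abelSeries (div_pos hα hβ) (abs_mul_exp_neg_lt_exp_neg_one hz)).mul_right
      (exp (-(α / β * (β * log a))))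
    rwa [abelSeries_mul_exp_neg (div_pos hα hβ) hz, ← exp_add, add_neg_cancel,
      exp_zero, ← funext (omegaW_eq_abelCoeff_mul ha hβ)] at this
end

section
/- For all real a, β, α with 1 < a ≤ e, 0 ≤ β < 1, α > 0, and every integer r ≥ 1, one has S(r,α,β,a) = Σ_{k=0}^∞ (β·log a)^k·(α+kβ)·S(r−1, α+kβ, β, a), where the series on the right converges. -/
/-- `S(r,α,β,a) = Σ_{k=0}^∞ (1/k!) (log a)^k (α+βk)^{k+r-1} a^{-(α+βk)}`
(the exponent `k+r-1` is taken in `ℤ`). -/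
noncomputable def SJ (r : ℕ) (α β a : ℝ) : ℝ :=
  ∑' k : ℕ, (1 / (Nat.factorial k : ℝ)) * Real.log a ^ k *
    (α + β * (k : ℝ)) ^ ((k : ℤ) + (r : ℤ) - 1) * a ^ (-(α + β * (k : ℝ)))

/-!
Expanding each `S(r-1, α+kβ, β, a)` turns the right-hand side into a double series over `(k, m)`
with nonnegative terms. On the antidiagonal `k + m = n` all terms share the base `x = α + βn`, and
since `α + βk = x - βm` the remaining factors `β^k (α+βk) x^m / m!` telescope to `x^(n+1) / n!`;
what is left is exactly the `n`-th term of `S(r, α, β, a)`. That series converges: writing its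
terms as `y^(n+r) e^(-y) / n!` with `y = (α + βn) log a`, the bound `y^n/n! ≤ t^n e^(y/t)` for any
`β log a ≤ t < 1` dominates them by a polynomial times a geometric sequence of ratio
`t e^((1/t - 1) β log a) ≤ t e^(1-t) < 1`. Nonnegativity then justifies the rearrangement.
-/

open Finset Real Nat

theorem sum_antidiagonal_pow_mul_sub_mul_pow_div_factorial {K : Type*} [Field K] [CharZero K]
    (b x : K) (n : ℕ) :
    ∑ p ∈ antidiagonal n, b ^ p.1 * (x - b * p.2) * x ^ p.2 / (p.2 ! : K) = x ^ (n + 1) / n ! := by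
  induction n with
  | zero => simp
  | succ n ih =>
    have hshift : ∀ p : ℕ × ℕ, b ^ (p.1 + 1) * (x - b * p.2) * x ^ p.2 / (p.2 ! : K) =
        b * (b ^ p.1 * (x - b * p.2) * x ^ p.2 / (p.2 ! : K)) := fun _ ↦ by ring
    rw [Nat.sum_antidiagonal_succ]
    simp only [hshift, ← mul_sum, ih]
    rw [Nat.factorial_succ]
    push_cast
    field_simp
    ring

theorem summable_prod_iff_summable_sum_antidiagonal_of_nonneg {A : Type*} [AddMonoid A]
    [HasAntidiagonal A] {f : A × A → ℝ} (hf : 0 ≤ f) :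
    Summable f ↔ Summable fun n ↦ ∑ p ∈ antidiagonal n, f p := by
  rw [← HasAntidiagonal.sigmaAntidiagonalEquivProd.summable_iff,
    summable_sigma_of_nonneg (f := f ∘ _) fun _ ↦ hf _]
  simp [Summable.of_finite, Finset.sum_attach]

theorem Summable.tsum_eq_tsum_sum_antidiagonal {A α : Type*} [AddMonoid A] [HasAntidiagonal A]
    [AddCommMonoid α] [TopologicalSpace α] [ContinuousAdd α] [T3Space α] {f : A × A → α}
    (hf : Summable f) : ∑' p, f p = ∑' n, ∑ p ∈ antidiagonal n, f p := by
  rw [← HasAntidiagonal.sigmaAntidiagonalEquivProd.tsum_eq]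
  refine ((HasAntidiagonal.sigmaAntidiagonalEquivProd.summable_iff.2 hf).tsum_sigma'
    fun _ ↦ Summable.of_finite).trans ?_
  simp [Finset.sum_attach]

theorem summable_add_one_pow_mul_geometric {ρ : ℝ} (h₀ : 0 < ρ) (h₁ : ρ < 1) (s : ℕ) :
    Summable fun n : ℕ ↦ ((n : ℝ) + 1) ^ s * ρ ^ n := by
  have h := (summable_nat_add_iff 1).2 (summable_pow_mul_geometric_of_norm_lt_one (R := ℝ) s
    (by rwa [norm_of_nonneg h₀.le]))
  refine (h.mul_left ρ⁻¹).congr fun n ↦ ?_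
  rw [Nat.cast_add_one, pow_succ]
  field_simp

theorem pow_div_factorial_le_pow_mul_exp_div {y t : ℝ} (hy : 0 ≤ y) (ht : 0 < t) (n : ℕ) :
    y ^ n / n ! ≤ t ^ n * exp (y / t) := by
  have h := pow_div_factorial_le_exp _ (div_nonneg hy ht.le) n
  rwa [div_pow, div_div, mul_comm, ← div_div, div_le_iff₀ (by positivity), mul_comm] at h

theorem summable_add_mul_pow_add_div_factorial_mul_exp_neg {c d : ℝ} (hc : 0 ≤ c) (hd₀ : 0 ≤ d)
    (hd₁ : d < 1) (s : ℕ) :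
    Summable fun n : ℕ ↦ (c + d * n) ^ (n + s) / n ! * exp (-(c + d * n)) := by
  obtain ⟨t, ht₀, hdt, ht₁⟩ : ∃ t : ℝ, 0 < t ∧ d ≤ t ∧ t < 1 :=
    ⟨(1 + d) / 2, by positivity, by linarith, by linarith⟩
  have hρ₁ : t * exp ((t⁻¹ - 1) * d) < 1 := by
    have hexp : (t⁻¹ - 1) * d ≤ 1 - t := by
      calc (t⁻¹ - 1) * d ≤ (t⁻¹ - 1) * t :=
            mul_le_mul_of_nonneg_left hdt (sub_nonneg.2 (one_le_inv₀ ht₀ |>.2 ht₁.le))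
        _ = 1 - t := by field_simp
    calc t * exp ((t⁻¹ - 1) * d) ≤ t * exp (1 - t) := by gcongr
      _ < exp (t - 1) * exp (1 - t) := by
        gcongr
        linarith [add_one_lt_exp (sub_ne_zero.2 ht₁.ne)]
      _ = 1 := by rw [← exp_add, sub_add_sub_cancel, sub_self, exp_zero]
  refine Summable.of_nonneg_of_le (fun n ↦ by positivity) (fun n ↦ ?_)
    ((summable_add_one_pow_mul_geometric (by positivity) hρ₁ s).mul_left
      (exp ((t⁻¹ - 1) * c) * (c + 1) ^ s))
  have hy : 0 ≤ c + d * n := by positivity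
  have hexp : exp ((c + d * n) / t) * exp (-(c + d * n)) =
      exp ((t⁻¹ - 1) * c) * exp ((t⁻¹ - 1) * d) ^ n := by
    rw [← exp_add, ← exp_nat_mul, ← exp_add]
    ring_nf
  calc (c + d * n) ^ (n + s) / n ! * exp (-(c + d * n))
      = (c + d * n) ^ n / n ! * exp (-(c + d * n)) * (c + d * n) ^ s := by ring
    _ ≤ t ^ n * exp ((c + d * n) / t) * exp (-(c + d * n)) * ((c + 1) * (n + 1)) ^ s := by
        gcongr
        · exact pow_div_factorial_le_pow_mul_exp_div hy ht₀ n
        · nlinarith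
    _ = exp ((t⁻¹ - 1) * c) * (c + 1) ^ s * ((n + 1) ^ s * (t * exp ((t⁻¹ - 1) * d)) ^ n) := by
        rw [mul_assoc (t ^ n), hexp, mul_pow]
        ring

namespace SJ

noncomputable def term (r : ℕ) (α β a : ℝ) (k : ℕ) : ℝ :=
  (1 / (k ! : ℝ)) * log a ^ k * (α + β * k) ^ ((k : ℤ) + r - 1) * a ^ (-(α + β * k))

theorem eq_tsum_term (r : ℕ) (α β a : ℝ) : SJ r α β a = ∑' k, term r α β a k := rfl

variable {r : ℕ} {α β a : ℝ}

theorem term_nonneg (hα : 0 ≤ α) (hβ : 0 ≤ β) (ha : 1 ≤ a) (k : ℕ) : 0 ≤ term r α β a k := by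
  have := log_nonneg ha
  unfold term
  positivity

theorem term_succ_eq (ha : 1 < a) (k : ℕ) :
    term (r + 1) α β a k = (log a ^ r)⁻¹ *
      ((log a * α + β * log a * k) ^ (k + r) / k ! * exp (-(log a * α + β * log a * k))) := by
  have hL : log a ≠ 0 := (log_pos ha).ne'
  have hexp : ((k : ℤ) + ((r + 1 : ℕ) : ℤ) - 1) = ((k + r : ℕ) : ℤ) := by push_cast; ring
  have hbase : log a * α + β * log a * k = log a * (α + β * k) := by ring
  rw [term, hexp, zpow_natCast, rpow_def_of_pos (by linarith), hbase, mul_pow, pow_add]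
  field_simp
  ring

theorem summable_term_succ (ha₁ : 1 < a) (ha₂ : a ≤ exp 1) (hα : 0 ≤ α) (hβ₀ : 0 ≤ β)
    (hβ₁ : β < 1) : Summable (term (r + 1) α β a) := by
  have hL₀ : 0 < log a := log_pos ha₁
  have hL₁ : log a ≤ 1 := by simpa using log_le_log (by linarith) ha₂
  have hd : β * log a < 1 := by nlinarith
  refine ((summable_add_mul_pow_add_div_factorial_mul_exp_neg (by positivity) (by positivity) hd r
    ).mul_left (log a ^ r)⁻¹).congr fun k ↦ (term_succ_eq ha₁ k).symm

theorem sum_antidiagonal_term (n : ℕ) (hx : α + β * n ≠ 0) :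
    ∑ p ∈ antidiagonal n, (β * log a) ^ p.1 * (α + p.1 * β) * term r (α + p.1 * β) β a p.2 =
      term (r + 1) α β a n := by
  set x := α + β * n
  have hterm : ∀ p ∈ antidiagonal n,
      (β * log a) ^ p.1 * (α + p.1 * β) * term r (α + p.1 * β) β a p.2 =
        log a ^ n * a ^ (-x) * x ^ ((r : ℤ) - 1) *
          (β ^ p.1 * (x - β * p.2) * x ^ p.2 / (p.2 ! : ℝ)) := by
    rintro ⟨k, m⟩ hkm
    obtain rfl : k + m = n := HasAntidiagonal.mem_antidiagonal.1 hkm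
    have hbase : α + k * β + β * m = x := by simp only [x]; push_cast; ring
    rw [term, hbase, add_sub_assoc, zpow_add₀ hx, zpow_natCast, pow_add]
    simp only [x]
    push_cast
    ring
  rw [sum_congr rfl hterm, ← mul_sum, sum_antidiagonal_pow_mul_sub_mul_pow_div_factorial, term]
  have hexp : (n : ℤ) + ((r + 1 : ℕ) : ℤ) - 1 = ((r : ℤ) - 1) + ((n + 1 : ℕ) : ℤ) := by
    push_cast; ring
  rw [hexp, zpow_add₀ hx, zpow_natCast]
  ring

end SJ

theorem SJ_recurrence (a β α : ℝ) (ha₁ : 1 < a) (ha₂ : a ≤ Real.exp 1)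
    (hβ₀ : 0 ≤ β) (hβ₁ : β < 1) (hα : 0 < α) (r : ℕ) (hr : 1 ≤ r) :
    Summable (fun k : ℕ =>
        (β * Real.log a) ^ k * (α + (k : ℝ) * β) * SJ (r - 1) (α + (k : ℝ) * β) β a) ∧
      SJ r α β a =
        ∑' k : ℕ, (β * Real.log a) ^ k * (α + (k : ℝ) * β) * SJ (r - 1) (α + (k : ℝ) * β) β a := by
  obtain ⟨r, rfl⟩ : ∃ s, r = s + 1 := ⟨r - 1, by omega⟩
  rw [Nat.add_sub_cancel]
  set F : ℕ × ℕ → ℝ := fun p ↦ (β * log a) ^ p.1 * (α + p.1 * β) * SJ.term r (α + p.1 * β) β a p.2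
  have hF : 0 ≤ F := fun p ↦ by
    have := SJ.term_nonneg (r := r) (by positivity : 0 ≤ α + p.1 * β) hβ₀ ha₁.le p.2
    have := log_nonneg ha₁.le
    positivity
  have hdiag (n : ℕ) : ∑ p ∈ antidiagonal n, F p = SJ.term (r + 1) α β a n :=
    SJ.sum_antidiagonal_term n (by positivity)
  have hFsum : Summable F := (summable_prod_iff_summable_sum_antidiagonal_of_nonneg hF).2 <| by
    simpa only [hdiag] using SJ.summable_term_succ (r := r) ha₁ ha₂ hα.le hβ₀ hβ₁
  have hrow (k : ℕ) : ∑' m, F (k, m) = (β * log a) ^ k * (α + k * β) * SJ r (α + k * β) β a := by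
    rw [SJ.eq_tsum_term, ← tsum_mul_left]
  obtain ⟨hrows, hcols⟩ := (summable_prod_of_nonneg hF).1 hFsum
  refine ⟨hcols.congr hrow, ?_⟩
  calc SJ (r + 1) α β a = ∑' n, ∑ p ∈ antidiagonal n, F p := by
        rw [SJ.eq_tsum_term]; exact tsum_congr fun n ↦ (hdiag n).symm
    _ = ∑' k, ∑' m, F (k, m) := by rw [← hFsum.tsum_eq_tsum_sum_antidiagonal, hFsum.tsum_prod' hrows]
    _ = _ := tsum_congr hrow
end
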